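/- arXiv:1407.1415 — 5 statements merged into one kernel-verified Lean document; each statement's English description precedes it below -/
import Mathlib

section
/- Let d ≥ 11 and p > p_JL. Set Discr = (d-2)^2 - 4p·c_∞^{p-1} > 0, γ = (d-2-√Discr)/2, and α = γ - 2/(p-1). Then 2 < α < d/2 - 1. -/
/-- value of `c_∞^{p-1}` -/
noncomputable def cInfPow (d : ℕ) (p : ℝ) : ℝ :=
  (2 / (p - 1)) * ((d : ℝ) - 2 - 2 / (p - 1))

/-- `Discr = (d-2)^2 - 4 p c_∞^{p-1}` -/
noncomputable def Discr (d : ℕ) (p : ℝ) : ℝ :=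
  ((d : ℝ) - 2) ^ 2 - 4 * p * cInfPow d p

/-- `γ = (d - 2 - √Discr)/2` -/
noncomputable def gam (d : ℕ) (p : ℝ) : ℝ :=
  ((d : ℝ) - 2 - Real.sqrt (Discr d p)) / 2

/-- for `d ≥ 11` and `p > p_JL`, the parameter
`α = γ - 2/(p-1)` satisfies `2 < α < d/2 - 1`. -/
theorem alpha_bounds (d : ℕ) (hd : 11 ≤ d) (p : ℝ)
    (hp : p > 1 + 4 / ((d : ℝ) - 4 - 2 * Real.sqrt ((d : ℝ) - 1))) :
    2 < gam d p - 2 / (p - 1) ∧ gam d p - 2 / (p - 1) < (d : ℝ) / 2 - 1 := by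
  have hd' : (11:ℝ) ≤ (d:ℝ) := by exact_mod_cast hd
  set s := Real.sqrt ((d : ℝ) - 1) with hs
  have hs0 : 0 ≤ s := Real.sqrt_nonneg _
  have hs2 : s ^ 2 = (d:ℝ) - 1 := Real.sq_sqrt (by linarith)
  have hs3 : s ≤ (d:ℝ) - 4 - s := by nlinarith
  have hq : 0 < (d:ℝ) - 4 - 2 * s := by nlinarith
  have hp1 : 1 < p := by
    have h4 : 0 < 4 / ((d:ℝ) - 4 - 2 * s) := by positivity
    linarith
  have hpe : (0:ℝ) < p - 1 := by linarith
  have hpe' : p - 1 ≠ 0 := ne_of_gt hpe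
  set m := 2 / (p - 1) with hmdef
  have hm0 : 0 < m := by positivity
  have h1 : 4 < (p - 1) * ((d:ℝ) - 4 - 2 * s) :=
    (div_lt_iff₀ hq).mp (by linarith)
  have hme : m * (p - 1) = 2 := by rw [hmdef]; field_simp
  have hm2 : 2 * m < (d:ℝ) - 4 - 2 * s := by nlinarith
  set t := (d:ℝ) - 2 - 2 * m with htdef
  have ht : 2 + 2 * s < t := by rw [htdef]; linarith
  have hD : Discr d p = t ^ 2 - 4 * t + 8 - 4 * (d:ℝ) := by
    rw [Discr, cInfPow, htdef, hmdef]
    field_simp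
    ring
  have hDpos : 0 < Discr d p := by rw [hD]; nlinarith
  have ht4 : 0 < t - 4 := by nlinarith
  have hlt : Real.sqrt (Discr d p) < t - 4 := by
    rw [show Real.sqrt (Discr d p) < t - 4 ↔ Discr d p < (t - 4) ^ 2 from
      Real.sqrt_lt' ht4]
    rw [hD]; nlinarith
  constructor
  · rw [gam]; rw [htdef] at hlt; linarith
  · rw [gam]
    have := Real.sqrt_nonneg (Discr d p)
    linarith
end

section
/- (Hardy away from the origin, critical exponent) Let d ≥ 3, q = (d-2)/2, and let u be a smooth compactly supported radial function. Then ∫_1^∞ (|u'(y)|²/y^{2q}) y^{d-1} dy ≥ (1/4) ∫_1^∞ (u²/(y^{2q+2}(1+log y)²)) y^{d-1} dy - C_d u(1)². -/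
open MeasureTheory

private lemma integrableOn_of_cont_of_zero {f : ℝ → ℝ} {R : ℝ}
    (hf : ContinuousOn f (Set.Ici 1)) (hR : 1 ≤ R) (h0 : ∀ y, R ≤ y → f y = 0) :
    IntegrableOn f (Set.Ioi (1:ℝ)) := by
  have h1 : IntegrableOn f (Set.Ioc 1 R) :=
    ((hf.mono Set.Icc_subset_Ici_self).integrableOn_Icc).mono_set Set.Ioc_subset_Icc_self
  have h2 : IntegrableOn f (Set.Ioi R) := by
    refine integrableOn_zero.congr_fun (fun y hy => (h0 y (le_of_lt hy)).symm)
      measurableSet_Ioi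
  refine (h1.union h2).mono_set (fun y hy => ?_)
  rcases le_or_gt y R with h | h
  · exact Or.inl ⟨hy, h⟩
  · exact Or.inr h

/-- Hardy inequality away from the origin, critical exponent
`q = (d-2)/2`, with a logarithmic weight, with respect to `y^{d-1} dy`. -/
theorem hardy_away_critical (d : ℕ) (hd : 3 ≤ d) (q : ℝ) (hq : q = ((d : ℝ) - 2) / 2) :
    ∃ C : ℝ, ∀ u : ℝ → ℝ, ContDiff ℝ (⊤ : ℕ∞) u → HasCompactSupport u →
      (∫ y in Set.Ioi (1 : ℝ), (deriv u y) ^ 2 / y ^ (2 * q) * y ^ (d - 1)) ≥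
        (1 / 4) * (∫ y in Set.Ioi (1 : ℝ),
            (u y) ^ 2 / (y ^ (2 * q + 2) * (1 + Real.log y) ^ 2) * y ^ (d - 1))
          - C * (u 1) ^ 2 := by
  refine ⟨1/2, fun u hu hus => ?_⟩
  have hu' : Continuous (deriv u) := hu.continuous_deriv (by simp)
  -- a bound beyond which u and deriv u vanish
  obtain ⟨R, hR1, hRz⟩ : ∃ R : ℝ, 1 ≤ R ∧ ∀ y, R ≤ y → u y = 0 ∧ deriv u y = 0 := by
    obtain ⟨r, hr⟩ := (hus.isBounded.union hus.deriv.isBounded).subset_closedBall 0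
    refine ⟨max 1 (r+1), le_max_left _ _, fun y hy => ?_⟩
    have hy' : y ∉ Metric.closedBall (0:ℝ) r := by
      simp only [Metric.mem_closedBall, Real.dist_eq, sub_zero]
      intro h
      have := le_trans (le_max_right 1 (r+1)) hy
      have : r + 1 ≤ y := this
      nlinarith [le_abs_self y]
    constructor
    · exact image_eq_zero_of_notMem_tsupport (fun h => hy' (hr (Or.inl h)))
    · exact image_eq_zero_of_notMem_tsupport (fun h => hy' (hr (Or.inr h)))
  -- notation
  set L : ℝ → ℝ := fun y => 1 + Real.log y with hL
  have hLpos : ∀ y : ℝ, 1 ≤ y → 0 < L y := fun y hy => by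
    have := Real.log_nonneg hy; simp only [hL]; linarith
  have hLcont : ContinuousOn L (Set.Ici 1) :=
    continuousOn_const.add (Real.continuousOn_log.mono (fun y hy => by
      simp only [Set.mem_compl_iff, Set.mem_singleton_iff]
      intro h; rw [Set.mem_Ici] at hy; linarith))
  set g : ℝ → ℝ := fun y => u y * deriv u y / L y - (u y)^2 / (2*y*(L y)^2) with hg
  set h : ℝ → ℝ := fun y => (u y)^2 / (y*(L y)^2) with hh
  set S : ℝ → ℝ := fun y => (2*y*(L y)*deriv u y - u y)^2 / (4*y*(L y)^2) with hS
  -- continuity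
  have hcont_g : ContinuousOn g (Set.Ici 1) := by
    apply ContinuousOn.sub
    · exact ((hu.continuous.continuousOn.mul hu'.continuousOn).div hLcont
        (fun y hy => (hLpos y hy).ne'))
    · exact (hu.continuous.continuousOn.pow 2).div
        ((continuousOn_const.mul continuousOn_id).mul (hLcont.pow 2))
        (fun y hy => by
          have := hLpos y hy
          have hy1 : (1:ℝ) ≤ y := hy
          positivity)
  have hcont_h : ContinuousOn h (Set.Ici 1) := by
    exact (hu.continuous.continuousOn.pow 2).div
      (continuousOn_id.mul (hLcont.pow 2))
      (fun y hy => by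
        have := hLpos y hy
        have hy1 : (1:ℝ) ≤ y := hy
        positivity)
  have hcont_S : ContinuousOn S (Set.Ici 1) := by
    refine ContinuousOn.div ?_ ((continuousOn_const.mul continuousOn_id).mul (hLcont.pow 2))
      (fun y hy => by
        have := hLpos y hy
        have hy1 : (1:ℝ) ≤ y := hy
        positivity)
    exact ((((continuousOn_const.mul continuousOn_id).mul hLcont).mul hu'.continuousOn).sub
      hu.continuous.continuousOn).pow 2
  have hcont_D : ContinuousOn (fun y => (deriv u y)^2 * y) (Set.Ici 1) :=
    (hu'.continuousOn.pow 2).mul continuousOn_id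
  -- integrability
  have hint_g : IntegrableOn g (Set.Ioi (1:ℝ)) :=
    integrableOn_of_cont_of_zero hcont_g hR1 (fun y hy => by
      simp [hg, (hRz y hy).1, (hRz y hy).2])
  have hint_h : IntegrableOn h (Set.Ioi (1:ℝ)) :=
    integrableOn_of_cont_of_zero hcont_h hR1 (fun y hy => by simp [hh, (hRz y hy).1])
  have hint_S : IntegrableOn S (Set.Ioi (1:ℝ)) :=
    integrableOn_of_cont_of_zero hcont_S hR1 (fun y hy => by
      simp [hS, (hRz y hy).1, (hRz y hy).2])
  have hint_D : IntegrableOn (fun y => (deriv u y)^2 * y) (Set.Ioi (1:ℝ)) :=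
    integrableOn_of_cont_of_zero hcont_D hR1 (fun y hy => by simp [(hRz y hy).2])
  -- FTC : ∫ g = - u(1)^2/2
  have hFTC : (∫ y in Set.Ioi (1:ℝ), g y) = -((u 1)^2/2) := by
    set F : ℝ → ℝ := fun y => (u y)^2 / (2 * L y) with hF
    have hFd : ∀ x ∈ Set.Ioi (1:ℝ), HasDerivAt F (g x) x := by
      intro x hx
      have hx1 : (1:ℝ) < x := hx
      have hx0 : x ≠ 0 := by linarith
      have hLx : L x ≠ 0 := (hLpos x hx1.le).ne'
      have h1 : HasDerivAt (fun y => (u y)^2) (2 * u x * deriv u x) x := by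
        have := ((hu.differentiable (by simp) x).hasDerivAt).pow 2
        refine this.congr_deriv ?_; ring
      have h2 : HasDerivAt (fun y => 2 * L y) (2 * x⁻¹) x :=
        ((Real.hasDerivAt_log hx0).const_add 1).const_mul 2
      have h3 := h1.div h2 (by simpa using hLx)
      refine h3.congr_deriv ?_
      simp only [hg]
      field_simp
    have hF0 : Filter.Tendsto F Filter.atTop (nhds 0) := by
      have : F =ᶠ[Filter.atTop] (fun _ => (0:ℝ)) :=
        Filter.eventually_atTop.2 ⟨R, fun y hy => by simp [hF, (hRz y hy).1]⟩
      exact Filter.Tendsto.congr' this.symm tendsto_const_nhds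
    have hFc : ContinuousWithinAt F (Set.Ici 1) 1 := by
      have : ContinuousOn F (Set.Ici 1) :=
        (hu.continuous.continuousOn.pow 2).div (continuousOn_const.mul hLcont)
          (fun y hy => by have := hLpos y hy; positivity)
      exact this 1 Set.self_mem_Ici
    have := integral_Ioi_of_hasDerivAt_of_tendsto hFc hFd hint_g hF0
    rw [this]
    simp [hF, hL]
  -- pointwise identity on Ioi 1
  have hid : ∀ y ∈ Set.Ioi (1:ℝ),
      (deriv u y)^2 * y = S y + g y + (1/4) * h y := by
    intro y hy
    have hy1 : (1:ℝ) < y := hy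
    have hy0 : y ≠ 0 := by linarith
    have hLy : L y ≠ 0 := (hLpos y hy1.le).ne'
    simp only [hS, hg, hh]
    field_simp
    ring
  -- reduce the two integrals in the statement
  have hq2 : 2 * q = ((d:ℝ)) - 2 := by rw [hq]; ring
  have hLHS : (∫ y in Set.Ioi (1:ℝ), (deriv u y) ^ 2 / y ^ (2 * q) * y ^ (d - 1)) =
      ∫ y in Set.Ioi (1:ℝ), (deriv u y)^2 * y := by
    refine setIntegral_congr_fun measurableSet_Ioi (fun y hy => ?_)
    have hy1 : (1:ℝ) < y := hy
    have hy0 : (0:ℝ) < y := by linarith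
    rw [hq2]
    have hcast : ((d:ℝ)) - 2 = ((d - 2 : ℕ) : ℝ) := by
      have : (2:ℕ) ≤ d := by omega
      push_cast [this]
      ring
    rw [hcast, Real.rpow_natCast]
    have hd1 : d - 1 = (d - 2) + 1 := by omega
    rw [hd1, pow_succ]
    field_simp
    ring
  have hRHS : (∫ y in Set.Ioi (1:ℝ),
      (u y) ^ 2 / (y ^ (2 * q + 2) * (1 + Real.log y) ^ 2) * y ^ (d - 1)) =
      ∫ y in Set.Ioi (1:ℝ), h y := by
    refine setIntegral_congr_fun measurableSet_Ioi (fun y hy => ?_)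
    have hy1 : (1:ℝ) < y := hy
    have hy0 : (0:ℝ) < y := by linarith
    have hLy : (0:ℝ) < L y := hLpos y hy1.le
    rw [hq2]
    have hcast : ((d:ℝ)) - 2 + 2 = ((d : ℕ) : ℝ) := by push_cast; ring
    rw [hcast, Real.rpow_natCast]
    have hd1 : d = (d - 1) + 1 := by omega
    simp only [hh, hL] at *
    rw [show y ^ d = y ^ (d-1) * y by rw [← pow_succ, ← hd1]]
    have hyp : (0:ℝ) < y ^ (d-1) := pow_pos hy0 _
    field_simp
  rw [hLHS, hRHS]
  -- assemble
  have hsplit : (∫ y in Set.Ioi (1:ℝ), (deriv u y)^2 * y) =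
      (∫ y in Set.Ioi (1:ℝ), S y) + (∫ y in Set.Ioi (1:ℝ), g y)
        + (1/4) * (∫ y in Set.Ioi (1:ℝ), h y) := by
    calc (∫ y in Set.Ioi (1:ℝ), (deriv u y)^2 * y)
        = ∫ y in Set.Ioi (1:ℝ), (S y + g y + (1/4) * h y) :=
          setIntegral_congr_fun measurableSet_Ioi (fun y hy => hid y hy)
      _ = (∫ y in Set.Ioi (1:ℝ), (S y + g y)) + ∫ y in Set.Ioi (1:ℝ), (1/4) * h y :=
          integral_add (hint_S.add hint_g) (hint_h.const_mul _)
      _ = (∫ y in Set.Ioi (1:ℝ), S y) + (∫ y in Set.Ioi (1:ℝ), g y)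
            + (1/4) * (∫ y in Set.Ioi (1:ℝ), h y) := by
          rw [integral_add hint_S hint_g, integral_const_mul]
  have hSnn : (0:ℝ) ≤ ∫ y in Set.Ioi (1:ℝ), S y := by
    refine setIntegral_nonneg measurableSet_Ioi (fun y hy => ?_)
    have hy1 : (1:ℝ) < y := hy
    have hLy : (0:ℝ) < L y := hLpos y hy1.le
    have : (0:ℝ) < 4*y*(L y)^2 := by positivity
    positivity
  rw [hsplit, hFTC]
  linarith
end

section
/- (Weighted Hardy for the gradient in terms of the Laplacian) Let d ≥ 1, δ > 0, and let u be a smooth compactly supported function on ℝ^d. Then ∫_{ℝ^d} |∇u|²/(1+|y|^{2+δ}) dy ≤ C_δ (∫_{ℝ^d} |Δu|²/(1+|y|^δ) dy + ∫_{ℝ^d} u²/(1+|y|^{4+δ}) dy). -/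
open MeasureTheory

open MeasureTheory Real RealInnerProductSpace

variable {d : ℕ}

local notation "E" => EuclideanSpace ℝ (Fin d)

noncomputable abbrev wgt (s : ℝ) (y : EuclideanSpace ℝ (Fin d)) : ℝ := (1 + ‖y‖ ^ 2) ^ (-s)

lemma one_le_base (y : E) : (1:ℝ) ≤ 1 + ‖y‖ ^ 2 := le_add_of_nonneg_right (by positivity)

lemma wgt_hasFDerivAt (s : ℝ) (y : E) :
    HasFDerivAt (wgt s) ((-s * (1 + ‖y‖ ^ 2) ^ (-s - 1)) • (2 • (innerSL ℝ y))) y := by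
  have h1 : HasFDerivAt (fun z : E => 1 + ‖z‖ ^ 2) (2 • (innerSL ℝ y)) y := by
    have := (hasFDerivAt_id (𝕜 := ℝ) y).norm_sq.const_add 1
    simpa using this
  have h2 : HasDerivAt (fun t : ℝ => t ^ (-s)) (-s * (1 + ‖y‖ ^ 2) ^ (-s - 1)) (1 + ‖y‖ ^ 2) := by
    simpa [mul_comm] using Real.hasDerivAt_rpow_const (x := 1 + ‖y‖ ^ 2) (p := -s)
      (Or.inl (by positivity))
  exact h2.comp_hasFDerivAt y h1

lemma wgt_fderiv_apply (s : ℝ) (y : E) (v : E) :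
    fderiv ℝ (wgt s) y v = -s * (1 + ‖y‖ ^ 2) ^ (-s - 1) * (2 * ⟪y, v⟫) := by
  rw [(wgt_hasFDerivAt s y).fderiv]
  simp [mul_assoc]

lemma wgt_contDiff (s : ℝ) : ContDiff ℝ (⊤ : ℕ∞) (wgt (d := d) s) := by
  have h : ContDiff ℝ (⊤ : ℕ∞) (fun z : E => 1 + ‖z‖ ^ 2) :=
    contDiff_const.add (contDiff_norm_sq ℝ)
  exact h.rpow_const_of_ne (fun y => by positivity)

lemma norm_clm_sq_le (L : EuclideanSpace ℝ (Fin d) →L[ℝ] ℝ) :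
    ‖L‖ ^ 2 ≤ ∑ i : Fin d, (L (EuclideanSpace.single i 1)) ^ 2 := by
  classical
  set v : EuclideanSpace ℝ (Fin d) := WithLp.toLp 2 (fun i => L (EuclideanSpace.single i 1)) with hv
  have hrep : ∀ x : EuclideanSpace ℝ (Fin d), L x = ⟪v, x⟫ := by
    intro x
    have hx : x = ∑ i : Fin d, (x i) • EuclideanSpace.single i (1:ℝ) := by
      ext j
      have : (∑ i : Fin d, (x i) • EuclideanSpace.single i (1:ℝ)) j
          = ∑ i : Fin d, ((x i) • EuclideanSpace.single i (1:ℝ)) j := by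
        rw [WithLp.ofLp_sum]; exact Finset.sum_apply j Finset.univ _
      rw [this]
      simp [EuclideanSpace.single_apply]
    calc L x = L (∑ i : Fin d, (x i) • EuclideanSpace.single i (1:ℝ)) := by rw [← hx]
      _ = ∑ i : Fin d, (x i) * L (EuclideanSpace.single i 1) := by
          rw [map_sum]; simp [mul_comm]
      _ = ⟪v, x⟫ := by
          rw [PiLp.inner_apply]
          exact Finset.sum_congr rfl (fun i _ => by simp [hv])
  have hLnorm : ‖L‖ ≤ ‖v‖ := by
    apply ContinuousLinearMap.opNorm_le_bound _ (norm_nonneg v)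
    intro x
    rw [hrep x]
    exact (abs_real_inner_le_norm v x).trans le_rfl
  have : ‖L‖ ^ 2 ≤ ‖v‖ ^ 2 := by
    have := pow_le_pow_left₀ (norm_nonneg L) hLnorm 2
    simpa using this
  refine this.trans_eq ?_
  rw [EuclideanSpace.norm_eq]
  rw [Real.sq_sqrt (by positivity)]
  exact Finset.sum_congr rfl (fun i _ => by simp [hv, sq_abs])

section IBP

variable {u : EuclideanSpace ℝ (Fin d) → ℝ}

local notation "e" i => EuclideanSpace.single i (1:ℝ)

lemma D_contDiff (hu : ContDiff ℝ (⊤ : ℕ∞) u) (i : Fin d) : ContDiff ℝ (⊤ : ℕ∞) (fun y : EuclideanSpace ℝ (Fin d) => fderiv ℝ u y (e i)) :=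
  (hu.fderiv_right (by simp)).clm_apply contDiff_const

lemma D_hcs (hcs : HasCompactSupport u) (i : Fin d) : HasCompactSupport (fun y : EuclideanSpace ℝ (Fin d) => fderiv ℝ u y (e i)) :=
  hcs.fderiv_apply ℝ (e i)

lemma D2_hcs (hcs : HasCompactSupport u) (i : Fin d) : HasCompactSupport
    (fun y : EuclideanSpace ℝ (Fin d) => fderiv ℝ (fun z => fderiv ℝ u z (e i)) y (e i)) :=
  (D_hcs hcs i).fderiv_apply ℝ (e i)

lemma D2_contDiff (hu : ContDiff ℝ (⊤ : ℕ∞) u) (i : Fin d) : ContDiff ℝ (⊤ : ℕ∞)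
    (fun y : EuclideanSpace ℝ (Fin d) => fderiv ℝ (fun z => fderiv ℝ u z (e i)) y (e i)) :=
  ((D_contDiff hu i).fderiv_right (by simp)).clm_apply contDiff_const

lemma ibp (hu : ContDiff ℝ (⊤ : ℕ∞) u) (hcs : HasCompactSupport u) (g : EuclideanSpace ℝ (Fin d) → ℝ) (hg : ContDiff ℝ (⊤ : ℕ∞) g) (i : Fin d) :
    ∫ y : EuclideanSpace ℝ (Fin d), g y * (fderiv ℝ u y (e i)) ^ 2
      = - ∫ y : EuclideanSpace ℝ (Fin d),
          (fderiv ℝ g y (e i) * fderiv ℝ u y (e i)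
            + g y * fderiv ℝ (fun z => fderiv ℝ u z (e i)) y (e i)) * u y := by
  classical
  set D : EuclideanSpace ℝ (Fin d) → ℝ := fun y => fderiv ℝ u y (e i) with hD
  set D2 : EuclideanSpace ℝ (Fin d) → ℝ := fun y => fderiv ℝ D y (e i) with hD2
  have hDc : ContDiff ℝ (⊤ : ℕ∞) D := D_contDiff hu i
  have hDcs : HasCompactSupport D := D_hcs hcs i
  have hD2c : ContDiff ℝ (⊤ : ℕ∞) D2 := D2_contDiff hu i
  have hD2cs : HasCompactSupport D2 := D2_hcs hcs i
  have hf : Differentiable ℝ (fun y => g y * D y) :=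
    (hg.differentiable (by simp)).mul (hDc.differentiable (by simp))
  have hfd : ∀ y, fderiv ℝ (fun y => g y * D y) y (e i)
      = fderiv ℝ g y (e i) * D y + g y * D2 y := by
    intro y
    rw [fderiv_fun_mul ((hg.differentiable (by simp)) y) ((hDc.differentiable (by simp)) y)]
    simp [hD2]
    ring
  have key := integral_mul_fderiv_eq_neg_fderiv_mul_of_integrable
    (μ := (volume : Measure (EuclideanSpace ℝ (Fin d))))
    (f := fun y => g y * D y) (g := u) (v := e i)
    ?_ ?_ ?_ (fun x _ => hf x) (fun x _ => hu.differentiable (by simp) x)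
  · calc ∫ y : EuclideanSpace ℝ (Fin d), g y * D y ^ 2
        = ∫ y : EuclideanSpace ℝ (Fin d), (g y * D y) * fderiv ℝ u y (e i) := by
          apply integral_congr_ae; filter_upwards with y
          change g y * D y ^ 2 = g y * D y * D y; ring
      _ = - ∫ y : EuclideanSpace ℝ (Fin d), fderiv ℝ (fun y => g y * D y) y (e i) * u y := key
      _ = - ∫ y : EuclideanSpace ℝ (Fin d), (fderiv ℝ g y (e i) * D y + g y * D2 y) * u y := by
          congr 1; apply integral_congr_ae; filter_upwards with y; rw [hfd y]
  · -- Integrable (fderiv (g*D) * u)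
    apply Continuous.integrable_of_hasCompactSupport
    · exact ((((hg.mul hDc).fderiv_right (m := (⊤ : ℕ∞)) (by simp)).clm_apply contDiff_const).continuous).mul hu.continuous
    · exact (hcs.mul_left)
  · apply Continuous.integrable_of_hasCompactSupport
    · exact ((hg.continuous).mul hDc.continuous).mul hDc.continuous
    · exact ((hDcs.mul_left).mul_right)
  · apply Continuous.integrable_of_hasCompactSupport
    · exact ((hg.continuous).mul hDc.continuous).mul hu.continuous
    · exact hcs.mul_left

end IBP

lemma rpow_up (t : ℝ) (ht : 0 ≤ t) (s : ℝ) (hs : 0 ≤ s) :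
    (1 + t ^ 2) ^ s ≤ 2 ^ s * (1 + t ^ (2 * s)) := by
  have hpow : (t ^ 2 : ℝ) ^ s = t ^ (2 * s) := by
    rw [← Real.rpow_natCast t 2, ← Real.rpow_mul ht]
    norm_num
  have h0 : (0:ℝ) ≤ t ^ (2 * s) := Real.rpow_nonneg ht _
  rcases le_total t 1 with h | h
  · have h2 : (1 + t ^ 2 : ℝ) ≤ 2 := by nlinarith
    calc (1 + t ^ 2) ^ s ≤ 2 ^ s := Real.rpow_le_rpow (by positivity) h2 hs
      _ ≤ 2 ^ s * (1 + t ^ (2 * s)) := le_mul_of_one_le_right (by positivity) (by linarith)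
  · have h2 : (1 + t ^ 2 : ℝ) ≤ 2 * t ^ 2 := by nlinarith
    calc (1 + t ^ 2) ^ s ≤ (2 * t ^ 2) ^ s := Real.rpow_le_rpow (by positivity) h2 hs
      _ = 2 ^ s * (t ^ 2) ^ s := Real.mul_rpow (by norm_num) (by positivity)
      _ = 2 ^ s * t ^ (2 * s) := by rw [hpow]
      _ ≤ 2 ^ s * (1 + t ^ (2 * s)) := by
          have : (0:ℝ) < 2 ^ s := by positivity
          nlinarith
lemma rpow_down (t : ℝ) (ht : 0 ≤ t) (s : ℝ) (hs : 0 ≤ s) :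
    1 + t ^ (2 * s) ≤ 2 * (1 + t ^ 2) ^ s := by
  have hpow : (t ^ 2 : ℝ) ^ s = t ^ (2 * s) := by
    rw [← Real.rpow_natCast t 2, ← Real.rpow_mul ht]
    norm_num
  have h1 : (1:ℝ) ≤ (1 + t ^ 2) ^ s := Real.one_le_rpow (by nlinarith) hs
  have h2 : t ^ (2 * s) ≤ (1 + t ^ 2) ^ s := by
    rw [← hpow]
    exact Real.rpow_le_rpow (by positivity) (by nlinarith) hs
  linarith

lemma rpow_sq' (p : ℝ) (hp : 0 < p) (r : ℝ) : (p ^ r) ^ 2 = p ^ (2 * r) := by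
  rw [← Real.rpow_natCast (p ^ r) 2, ← Real.rpow_mul hp.le]
  norm_num
  ring_nf

lemma youngA (p : ℝ) (hp : 1 ≤ p) (s : ℝ) (hs : 0 < s) (di A U : ℝ)
    (hdi : |di| ≤ 2 * s * p ^ (-s - 1/2)) :
    |di * A * U| ≤ (1/4) * (p ^ (-s) * A ^ 2) + 4 * s ^ 2 * (p ^ (-(s+1)) * U ^ 2) := by
  have hp0 : (0:ℝ) < p := lt_of_lt_of_le one_pos hp
  have k1 : p ^ (-s - 1/2) = p ^ (-s/2) * p ^ (-(s+1)/2) := by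
    rw [← Real.rpow_add hp0]; ring_nf
  have k2 : (p ^ (-s/2)) ^ 2 = p ^ (-s) := by rw [rpow_sq' p hp0]; ring_nf
  have k3 : (p ^ (-(s+1)/2)) ^ 2 = p ^ (-(s+1)) := by rw [rpow_sq' p hp0]; ring_nf
  have k4 : |di * A * U| ≤ 2 * s * (p ^ (-s/2) * p ^ (-(s+1)/2)) * (|A| * |U|) := by
    calc |di * A * U| = |di| * (|A| * |U|) := by rw [abs_mul, abs_mul]; ring
      _ ≤ (2 * s * p ^ (-s - 1/2)) * (|A| * |U|) :=
          mul_le_mul_of_nonneg_right hdi (by positivity)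
      _ = 2 * s * (p ^ (-s/2) * p ^ (-(s+1)/2)) * (|A| * |U|) := by rw [k1]
  rw [← k2, ← k3]
  have e2 : (p ^ (-s/2)) ^ 2 * |A| ^ 2 = (p ^ (-s/2)) ^ 2 * A ^ 2 := by rw [sq_abs]
  have e3 : (p ^ (-(s+1)/2)) ^ 2 * |U| ^ 2 = (p ^ (-(s+1)/2)) ^ 2 * U ^ 2 := by rw [sq_abs]
  nlinarith [k4, sq_nonneg (p ^ (-s/2) * |A| / 2 - 2 * s * (p ^ (-(s+1)/2) * |U|)), e2, e3]

lemma youngB (p : ℝ) (hp : 1 ≤ p) (δ : ℝ) (hδ : 0 < δ) (U L : ℝ) :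
    |p ^ (-(1+δ/2)) * U * L| ≤ (1/2) * (p ^ (-(δ/2)) * L ^ 2)
      + (1/2) * (p ^ (-(1+δ/2+1)) * U ^ 2) := by
  have hp0 : (0:ℝ) < p := lt_of_lt_of_le one_pos hp
  have k1 : p ^ (-(1+δ/2)) = p ^ (-(δ/2)/2) * p ^ (-(1+δ/2+1)/2) := by
    rw [← Real.rpow_add hp0]; ring_nf
  have k2 : (p ^ (-(δ/2)/2)) ^ 2 = p ^ (-(δ/2)) := by rw [rpow_sq' p hp0]; ring_nf
  have k3 : (p ^ (-(1+δ/2+1)/2)) ^ 2 = p ^ (-(1+δ/2+1)) := by rw [rpow_sq' p hp0]; ring_nf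
  have k4 : |p ^ (-(1+δ/2)) * U * L| = (p ^ (-(δ/2)/2) * p ^ (-(1+δ/2+1)/2)) * (|U| * |L|) := by
    rw [abs_mul, abs_mul, abs_of_pos (Real.rpow_pos_of_pos hp0 _), k1]; ring
  rw [← k2, ← k3]
  have e2 : (p ^ (-(δ/2)/2)) ^ 2 * |L| ^ 2 = (p ^ (-(δ/2)/2)) ^ 2 * L ^ 2 := by rw [sq_abs]
  have e3 : (p ^ (-(1+δ/2+1)/2)) ^ 2 * |U| ^ 2 = (p ^ (-(1+δ/2+1)/2)) ^ 2 * U ^ 2 := by rw [sq_abs]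
  nlinarith [k4, sq_nonneg (p ^ (-(δ/2)/2) * |L| - p ^ (-(1+δ/2+1)/2) * |U|), e2, e3]

lemma wgt_deriv_bound (s : ℝ) (hs : 0 < s) (y : E) (i : Fin d) :
    |fderiv ℝ (wgt s) y (EuclideanSpace.single i (1:ℝ))| ≤ 2 * s * (1 + ‖y‖ ^ 2) ^ (-s - 1/2) := by
  have hp0 : (0:ℝ) < 1 + ‖y‖ ^ 2 := by positivity
  rw [wgt_fderiv_apply]
  have hy : |⟪y, EuclideanSpace.single i (1:ℝ)⟫| ≤ ‖y‖ := by
    calc |⟪y, EuclideanSpace.single i (1:ℝ)⟫| ≤ ‖y‖ * ‖EuclideanSpace.single i (1:ℝ)‖ :=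
          abs_real_inner_le_norm _ _
      _ = ‖y‖ := by rw [EuclideanSpace.norm_single]; simp
  have hyp : ‖y‖ ≤ (1 + ‖y‖ ^ 2) ^ (1/2 : ℝ) := by
    have h1 : ‖y‖ = (‖y‖ ^ 2 : ℝ) ^ (1/2 : ℝ) := by
      rw [← Real.rpow_natCast ‖y‖ 2, ← Real.rpow_mul (norm_nonneg y)]
      norm_num
    calc ‖y‖ = (‖y‖ ^ 2 : ℝ) ^ (1/2 : ℝ) := h1
      _ ≤ (1 + ‖y‖ ^ 2) ^ (1/2 : ℝ) :=
          Real.rpow_le_rpow (by positivity) (by linarith) (by norm_num)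
  have hsplit : (1 + ‖y‖ ^ 2 : ℝ) ^ (-s - 1) * (1 + ‖y‖ ^ 2) ^ (1/2 : ℝ)
      = (1 + ‖y‖ ^ 2) ^ (-s - 1/2) := by
    rw [← Real.rpow_add hp0]; ring_nf
  have hpow1 : (0:ℝ) < (1 + ‖y‖ ^ 2) ^ (-s - 1) := Real.rpow_pos_of_pos hp0 _
  calc |(-s) * (1 + ‖y‖ ^ 2) ^ (-s - 1) * (2 * ⟪y, EuclideanSpace.single i (1:ℝ)⟫)|
      = s * (1 + ‖y‖ ^ 2) ^ (-s - 1) * (2 * |⟪y, EuclideanSpace.single i (1:ℝ)⟫|) := by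
        rw [abs_mul, abs_mul, abs_mul, abs_neg, abs_of_pos hs, abs_of_pos hpow1]
        norm_num
    _ ≤ s * (1 + ‖y‖ ^ 2) ^ (-s - 1) * (2 * (1 + ‖y‖ ^ 2) ^ (1/2 : ℝ)) := by
        apply mul_le_mul_of_nonneg_left _ (by positivity)
        have := hy.trans hyp
        linarith
    _ = 2 * s * ((1 + ‖y‖ ^ 2) ^ (-s - 1) * (1 + ‖y‖ ^ 2) ^ (1/2 : ℝ)) := by ring
    _ = 2 * s * (1 + ‖y‖ ^ 2) ^ (-s - 1/2) := by rw [hsplit]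

lemma inv_weight_le (t c q : ℝ) (ht : 0 ≤ t) (hq : 0 ≤ q) :
    (1 + t ^ 2) ^ (-q) * c ^ 2 ≤ 2 * (c ^ 2 / (1 + t ^ (2 * q))) := by
  have h := rpow_down t ht q hq
  have hpos : (0:ℝ) < (1 + t ^ 2) ^ q := Real.rpow_pos_of_pos (by positivity) _
  have hb : (0:ℝ) < 1 + t ^ (2 * q) := by
    have := Real.rpow_nonneg ht (2 * q); linarith
  have key : ((1 + t ^ 2) ^ q)⁻¹ ≤ 2 / (1 + t ^ (2 * q)) := by
    rw [inv_eq_one_div, div_le_div_iff₀ hpos hb]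
    linarith
  calc (1 + t ^ 2) ^ (-q) * c ^ 2 = c ^ 2 * ((1 + t ^ 2) ^ q)⁻¹ := by
        rw [Real.rpow_neg (by positivity)]; ring
    _ ≤ c ^ 2 * (2 / (1 + t ^ (2 * q))) := mul_le_mul_of_nonneg_left key (by positivity)
    _ = 2 * (c ^ 2 / (1 + t ^ (2 * q))) := by ring

lemma abs_integral_le' {α : Type*} [MeasurableSpace α] {μ : MeasureTheory.Measure α} (f : α → ℝ) :
    |∫ y, f y ∂μ| ≤ ∫ y, |f y| ∂μ := by
  simpa [Real.norm_eq_abs] using MeasureTheory.norm_integral_le_integral_norm (μ := μ) f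


lemma final_combine (I P' Q' K : ℝ) (hK : 0 ≤ K) (hP : 0 ≤ P') (hQ : 0 ≤ Q')
    (h : I ≤ (4/3) * P' + (8/3) * (K + 1/2) * Q') :
    I ≤ (8/3) * (K + 1) * (P' + Q') := by nlinarith


/-- The Laplacian on `ℝ^d`, as the trace of the second derivative. -/
noncomputable def lap (d : ℕ) (u : EuclideanSpace ℝ (Fin d) → ℝ)
    (y : EuclideanSpace ℝ (Fin d)) : ℝ :=
  ∑ i : Fin d,
    iteratedFDeriv ℝ 2 u y ![EuclideanSpace.single i 1, EuclideanSpace.single i 1]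

set_option maxHeartbeats 1000000 in
/-- weighted Hardy inequality for the gradient in terms of the
Laplacian, `∫ |∇u|²/(1+|y|^{2+δ}) ≤ C_δ (∫ |Δu|²/(1+|y|^δ) + ∫ u²/(1+|y|^{4+δ}))`. -/
theorem weighted_hardy_gradient (d : ℕ) (hd : 1 ≤ d) (δ : ℝ) (hδ : 0 < δ) :
    ∃ C : ℝ, ∀ u : EuclideanSpace ℝ (Fin d) → ℝ, ContDiff ℝ (⊤ : ℕ∞) u → HasCompactSupport u →
      (∫ y : EuclideanSpace ℝ (Fin d), ‖fderiv ℝ u y‖ ^ 2 / (1 + ‖y‖ ^ (2 + δ))) ≤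
        C * ((∫ y : EuclideanSpace ℝ (Fin d), (lap d u y) ^ 2 / (1 + ‖y‖ ^ δ))
          + ∫ y : EuclideanSpace ℝ (Fin d), (u y) ^ 2 / (1 + ‖y‖ ^ (4 + δ))) := by
  classical
  set s : ℝ := 1 + δ / 2 with hs_def
  have hs : 0 < s := by rw [hs_def]; linarith
  refine ⟨2 ^ s * (8 / 3) * (4 * d * s ^ 2 + 1), ?_⟩
  intro u hu hcs
  set D : Fin d → EuclideanSpace ℝ (Fin d) → ℝ := fun i y => fderiv ℝ u y (EuclideanSpace.single i (1:ℝ)) with hD_def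
  set D2 : Fin d → EuclideanSpace ℝ (Fin d) → ℝ :=
    fun i y => fderiv ℝ (fun z => fderiv ℝ u z (EuclideanSpace.single i (1:ℝ))) y
      (EuclideanSpace.single i (1:ℝ)) with hD2_def
  -- vanishing outside the support of u
  have hDz : ∀ i (y : EuclideanSpace ℝ (Fin d)), y ∉ tsupport u → D i y = 0 := by
    intro i y hy
    have : y ∉ tsupport (fderiv ℝ u) := fun h => hy (tsupport_fderiv_subset ℝ h)
    simp [hD_def, image_eq_zero_of_notMem_tsupport this]
  have hDsub : ∀ i, tsupport (D i) ⊆ tsupport u := by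
    intro i
    apply closure_minimal _ (isClosed_closure)
    intro y hy
    by_contra h
    exact hy (hDz i y h)
  have hD2z : ∀ i (y : EuclideanSpace ℝ (Fin d)), y ∉ tsupport u → D2 i y = 0 := by
    intro i y hy
    have h2 : y ∉ tsupport (fderiv ℝ (D i)) :=
      fun h => hy (hDsub i (tsupport_fderiv_subset ℝ h))
    show fderiv ℝ (D i) y (EuclideanSpace.single i (1:ℝ)) = 0
    simp [image_eq_zero_of_notMem_tsupport h2]
  -- regularity
  have hDc : ∀ i, ContDiff ℝ (⊤ : ℕ∞) (D i) := fun i => D_contDiff hu i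
  have hD2c : ∀ i, Continuous (D2 i) := fun i => (D2_contDiff hu i).continuous
  -- the integrability machine
  have mk_int : ∀ f : EuclideanSpace ℝ (Fin d) → ℝ, Continuous f → (∀ y, y ∉ tsupport u → f y = 0) → Integrable f := by
    intro f hc hz
    apply hc.integrable_of_hasCompactSupport
    apply hcs.mono'
    intro y hy
    by_contra h
    exact hy (hz y h)
  -- Laplacian identity
  have lap_eq : ∀ y : EuclideanSpace ℝ (Fin d), lap d u y = ∑ i : Fin d, D2 i y := by
    intro y
    unfold lap
    refine Finset.sum_congr rfl (fun i _ => ?_)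
    rw [iteratedFDeriv_two_apply]
    have hdiff : DifferentiableAt ℝ (fderiv ℝ u) y :=
      ((hu.fderiv_right (m := (⊤ : ℕ∞)) (by simp)).differentiable (by simp)) y
    have := fderiv_clm_apply (𝕜 := ℝ) (c := fderiv ℝ u)
      (u := fun _ : EuclideanSpace ℝ (Fin d) => EuclideanSpace.single i (1:ℝ)) (x := y) hdiff (differentiableAt_const _)
    simp only [hD2_def, this]
    simp
  have lap_cont : Continuous (lap d u) := by
    have : Continuous fun y : EuclideanSpace ℝ (Fin d) => ∑ i : Fin d, D2 i y :=
      continuous_finset_sum _ (fun i _ => hD2c i)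
    exact this.congr (fun y => (lap_eq y).symm)
  have lap_z : ∀ y : EuclideanSpace ℝ (Fin d), y ∉ tsupport u → lap d u y = 0 := by
    intro y hy
    rw [lap_eq]
    exact Finset.sum_eq_zero (fun i _ => hD2z i y hy)
  -- weights
  set g : EuclideanSpace ℝ (Fin d) → ℝ := wgt s with hg_def
  set g1 : EuclideanSpace ℝ (Fin d) → ℝ := wgt (δ/2) with hg1_def
  set h1 : EuclideanSpace ℝ (Fin d) → ℝ := wgt (s+1) with hh1_def
  have hgc : Continuous g := (wgt_contDiff s).continuous
  have hg1c : Continuous g1 := (wgt_contDiff (δ/2)).continuous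
  have hh1c : Continuous h1 := (wgt_contDiff (s+1)).continuous
  have hdgc : ∀ i : Fin d,
      Continuous (fun y => fderiv ℝ g y (EuclideanSpace.single i (1:ℝ))) :=
    fun i => (((wgt_contDiff s).fderiv_right (m := (⊤ : ℕ∞)) (by simp)).clm_apply contDiff_const).continuous
  -- integrability
  have int1 : ∀ i, Integrable (fun y => g y * D i y ^ 2) := fun i =>
    mk_int _ (hgc.mul (((hDc i).continuous).pow 2)) (fun y hy => by simp [hDz i y hy])
  have int2 : ∀ i, Integrable
      (fun y => fderiv ℝ g y (EuclideanSpace.single i (1:ℝ)) * D i y * u y) := fun i =>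
    mk_int _ (((hdgc i).mul (hDc i).continuous).mul hu.continuous)
      (fun y hy => by simp [image_eq_zero_of_notMem_tsupport hy])
  have int3 : ∀ i, Integrable (fun y => (g y * D2 i y) * u y) := fun i =>
    mk_int _ ((hgc.mul (hD2c i)).mul hu.continuous)
      (fun y hy => by simp [image_eq_zero_of_notMem_tsupport hy])
  have int4 : Integrable (fun y => g1 y * lap d u y ^ 2) :=
    mk_int _ (hg1c.mul (lap_cont.pow 2)) (fun y hy => by simp [lap_z y hy])
  have int5 : Integrable (fun y => h1 y * u y ^ 2) :=
    mk_int _ (hh1c.mul (hu.continuous.pow 2))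
      (fun y hy => by simp [image_eq_zero_of_notMem_tsupport hy])
  -- names for the main quantities
  set P : ℝ := ∫ y, g1 y * lap d u y ^ 2 with hP_def
  set Q : ℝ := ∫ y, h1 y * u y ^ 2 with hQ_def
  set I : ℝ := ∑ i : Fin d, ∫ y, g y * D i y ^ 2 with hI_def
  -- integration by parts
  have ibp_i : ∀ i, (∫ y, g y * D i y ^ 2)
      = -((∫ y, fderiv ℝ g y (EuclideanSpace.single i (1:ℝ)) * D i y * u y)
          + (∫ y, (g y * D2 i y) * u y)) := by
    intro i
    have h0 : (∫ y, g y * D i y ^ 2)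
        = - ∫ y, (fderiv ℝ g y (EuclideanSpace.single i (1:ℝ)) * D i y + g y * D2 i y) * u y :=
      ibp hu hcs g (wgt_contDiff s) i
    rw [h0]
    congr 1
    rw [← integral_add (int2 i) (int3 i)]
    apply integral_congr_ae; filter_upwards with y; ring
  -- bound on the first-order terms
  have bX : ∀ i, |∫ y, fderiv ℝ g y (EuclideanSpace.single i (1:ℝ)) * D i y * u y|
      ≤ (1/4) * (∫ y, g y * D i y ^ 2) + 4 * s ^ 2 * Q := by
    intro i
    have habs : |∫ y, fderiv ℝ g y (EuclideanSpace.single i (1:ℝ)) * D i y * u y|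
        ≤ ∫ y, |fderiv ℝ g y (EuclideanSpace.single i (1:ℝ)) * D i y * u y| :=
      abs_integral_le' _
    have hmono : (∫ y, |fderiv ℝ g y (EuclideanSpace.single i (1:ℝ)) * D i y * u y|)
        ≤ ∫ y, ((1/4) * (g y * D i y ^ 2) + 4 * s ^ 2 * (h1 y * u y ^ 2)) := by
      apply integral_mono_of_nonneg
      · filter_upwards with y; exact abs_nonneg _
      · exact ((int1 i).const_mul _).add (int5.const_mul _)
      · filter_upwards with y
        exact youngA (1 + ‖y‖ ^ 2) (one_le_base y) s hs _ _ _ (wgt_deriv_bound s hs y i)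
    have heq : (∫ y, ((1/4) * (g y * D i y ^ 2) + 4 * s ^ 2 * (h1 y * u y ^ 2)))
        = (1/4) * (∫ y, g y * D i y ^ 2) + 4 * s ^ 2 * Q := by
      rw [integral_add ((int1 i).const_mul _) (int5.const_mul _),
        integral_const_mul, integral_const_mul]
    linarith
  -- bound on the Laplacian term
  have bY : |∑ i : Fin d, ∫ y, (g y * D2 i y) * u y| ≤ (1/2) * P + (1/2) * Q := by
    have hsum : (∑ i : Fin d, ∫ y, (g y * D2 i y) * u y)
        = ∫ y, (g y * lap d u y) * u y := by
      rw [← integral_finset_sum _ (fun i _ => int3 i)]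
      apply integral_congr_ae; filter_upwards with y
      rw [lap_eq y, Finset.mul_sum, Finset.sum_mul]
    rw [hsum]
    have habs : |∫ y, (g y * lap d u y) * u y| ≤ ∫ y, |(g y * lap d u y) * u y| :=
      abs_integral_le' _
    have intgl : Integrable (fun y => (g y * lap d u y) * u y) :=
      mk_int _ ((hgc.mul lap_cont).mul hu.continuous)
        (fun y hy => by simp [image_eq_zero_of_notMem_tsupport hy])
    have hmono : (∫ y, |(g y * lap d u y) * u y|)
        ≤ ∫ y, ((1/2) * (g1 y * lap d u y ^ 2) + (1/2) * (h1 y * u y ^ 2)) := by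
      apply integral_mono_of_nonneg
      · filter_upwards with y; exact abs_nonneg _
      · exact (int4.const_mul _).add (int5.const_mul _)
      · filter_upwards with y
        have hre : (g y * lap d u y) * u y = g y * u y * lap d u y := by ring
        rw [hre]
        exact youngB (1 + ‖y‖ ^ 2) (one_le_base y) δ hδ (u y) (lap d u y)
    have heq : (∫ y, ((1/2) * (g1 y * lap d u y ^ 2) + (1/2) * (h1 y * u y ^ 2)))
        = (1/2) * P + (1/2) * Q := by
      rw [integral_add (int4.const_mul _) (int5.const_mul _),
        integral_const_mul, integral_const_mul]
    linarith
  -- the main estimate on I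
  have keyI : I ≤ (1/4) * I + ((1/2) * P + (4 * d * s ^ 2 + 1/2) * Q) := by
    have hIeq : I = -((∑ i : Fin d, ∫ y, fderiv ℝ g y (EuclideanSpace.single i (1:ℝ)) * D i y * u y)
        + (∑ i : Fin d, ∫ y, (g y * D2 i y) * u y)) := by
      rw [hI_def, Finset.sum_congr rfl (fun i _ => ibp_i i), Finset.sum_neg_distrib,
        Finset.sum_add_distrib]
    have hX1 : -(∑ i : Fin d, ∫ y, fderiv ℝ g y (EuclideanSpace.single i (1:ℝ)) * D i y * u y)
        ≤ ∑ i : Fin d, |∫ y, fderiv ℝ g y (EuclideanSpace.single i (1:ℝ)) * D i y * u y| :=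
      (neg_le_abs _).trans (Finset.abs_sum_le_sum_abs _ _)
    have hX2 : (∑ i : Fin d, |∫ y, fderiv ℝ g y (EuclideanSpace.single i (1:ℝ)) * D i y * u y|)
        ≤ (1/4) * I + d * (4 * s ^ 2 * Q) := by
      calc (∑ i : Fin d, |∫ y, fderiv ℝ g y (EuclideanSpace.single i (1:ℝ)) * D i y * u y|)
          ≤ ∑ i : Fin d, ((1/4) * (∫ y, g y * D i y ^ 2) + 4 * s ^ 2 * Q) :=
            Finset.sum_le_sum (fun i _ => bX i)
        _ = (1/4) * I + d * (4 * s ^ 2 * Q) := by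
            rw [Finset.sum_add_distrib, ← Finset.mul_sum, ← hI_def, Finset.sum_const,
              Finset.card_univ, Fintype.card_fin, nsmul_eq_mul]
    have hY1 : -(∑ i : Fin d, ∫ y, (g y * D2 i y) * u y)
        ≤ (1/2) * P + (1/2) * Q := (neg_le_abs _).trans bY
    have hring : (4 * (d:ℝ) * s ^ 2 + 1/2) * Q = (d:ℝ) * (4 * s ^ 2 * Q) + (1/2) * Q := by ring
    linarith
  -- comparison of the left-hand side with I
  have hLHS : (∫ y : EuclideanSpace ℝ (Fin d), ‖fderiv ℝ u y‖ ^ 2 / (1 + ‖y‖ ^ (2 + δ)))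
      ≤ 2 ^ s * I := by
    have hmono : (∫ y : EuclideanSpace ℝ (Fin d), ‖fderiv ℝ u y‖ ^ 2 / (1 + ‖y‖ ^ (2 + δ)))
        ≤ ∫ y, ∑ i : Fin d, 2 ^ s * (g y * D i y ^ 2) := by
      apply integral_mono_of_nonneg
      · filter_upwards with y
        have hb : (0:ℝ) < 1 + ‖y‖ ^ (2 + δ) := by
          have := Real.rpow_nonneg (norm_nonneg y) (2 + δ); linarith
        positivity
      · exact integrable_finset_sum _ (fun i _ => (int1 i).const_mul _)
      · filter_upwards with y
        have hb : (0:ℝ) < 1 + ‖y‖ ^ (2 + δ) := by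
          have := Real.rpow_nonneg (norm_nonneg y) (2 + δ); linarith
        have hnum : ‖fderiv ℝ u y‖ ^ 2 ≤ ∑ i : Fin d, D i y ^ 2 := norm_clm_sq_le _
        have hsumnn : (0:ℝ) ≤ ∑ i : Fin d, D i y ^ 2 :=
          Finset.sum_nonneg (fun i _ => sq_nonneg _)
        have hinv : (1 + ‖y‖ ^ (2 + δ))⁻¹ ≤ 2 ^ s * g y := by
          have h2s : (2:ℝ) * s = 2 + δ := by rw [hs_def]; ring
          have h := rpow_up ‖y‖ (norm_nonneg y) s hs.le
          rw [h2s] at h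
          have hbpos : (0:ℝ) < (1 + ‖y‖ ^ 2) ^ s := Real.rpow_pos_of_pos (by positivity) _
          have hgy : g y = ((1 + ‖y‖ ^ 2) ^ s)⁻¹ := Real.rpow_neg (by positivity) s
          rw [hgy, ← div_eq_mul_inv ((2:ℝ)^s), inv_eq_one_div, div_le_div_iff₀ hb hbpos]
          linarith
        calc ‖fderiv ℝ u y‖ ^ 2 / (1 + ‖y‖ ^ (2 + δ))
            = ‖fderiv ℝ u y‖ ^ 2 * (1 + ‖y‖ ^ (2 + δ))⁻¹ := div_eq_mul_inv _ _
          _ ≤ (∑ i : Fin d, D i y ^ 2) * (2 ^ s * g y) :=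
              mul_le_mul hnum hinv (by positivity) hsumnn
          _ = ∑ i : Fin d, 2 ^ s * (g y * D i y ^ 2) := by
              rw [Finset.sum_mul]
              exact Finset.sum_congr rfl (fun i _ => by ring)
    have heq : (∫ y, ∑ i : Fin d, 2 ^ s * (g y * D i y ^ 2)) = 2 ^ s * I := by
      rw [integral_finset_sum _ (fun i _ => (int1 i).const_mul _), hI_def, Finset.mul_sum]
      exact Finset.sum_congr rfl (fun i _ => integral_const_mul _ _)
    linarith
  -- comparison of P and Q with the right-hand side integrals
  set P' : ℝ := ∫ y : EuclideanSpace ℝ (Fin d), lap d u y ^ 2 / (1 + ‖y‖ ^ δ) with hP'_def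
  set Q' : ℝ := ∫ y : EuclideanSpace ℝ (Fin d), u y ^ 2 / (1 + ‖y‖ ^ (4 + δ)) with hQ'_def
  have hδc : Continuous fun y : EuclideanSpace ℝ (Fin d) => (1:ℝ) + ‖y‖ ^ δ :=
    continuous_const.add ((continuous_norm).rpow_const (fun y => Or.inr hδ.le))
  have hδ4c : Continuous fun y : EuclideanSpace ℝ (Fin d) => (1:ℝ) + ‖y‖ ^ (4 + δ) :=
    continuous_const.add ((continuous_norm).rpow_const (fun y => Or.inr (by linarith)))
  have hδpos : ∀ y : EuclideanSpace ℝ (Fin d), (0:ℝ) < 1 + ‖y‖ ^ δ := fun y => by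
    have := Real.rpow_nonneg (norm_nonneg y) δ; linarith
  have hδ4pos : ∀ y : EuclideanSpace ℝ (Fin d), (0:ℝ) < 1 + ‖y‖ ^ (4 + δ) := fun y => by
    have := Real.rpow_nonneg (norm_nonneg y) (4 + δ); linarith
  have hPle : P ≤ 2 * P' := by
    have hmono : P ≤ ∫ y, 2 * (lap d u y ^ 2 / (1 + ‖y‖ ^ δ)) := by
      rw [hP_def]
      apply integral_mono_of_nonneg
      · filter_upwards with y
        have : (0:ℝ) ≤ g1 y := (Real.rpow_pos_of_pos (by positivity) _).le
        positivity
      · refine mk_int _ (continuous_const.mul ((lap_cont.pow 2).div hδc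
          (fun y => (hδpos y).ne'))) (fun y hy => by simp [lap_z y hy])
      · filter_upwards with y
        have h := inv_weight_le ‖y‖ (lap d u y) (δ/2) (norm_nonneg y) (by linarith)
        rw [show 2 * (δ/2) = δ by ring] at h
        exact h
    have heq : (∫ y, 2 * (lap d u y ^ 2 / (1 + ‖y‖ ^ δ))) = 2 * P' :=
      integral_const_mul _ _
    linarith
  have hQle : Q ≤ 2 * Q' := by
    have hmono : Q ≤ ∫ y, 2 * (u y ^ 2 / (1 + ‖y‖ ^ (4 + δ))) := by
      rw [hQ_def]
      apply integral_mono_of_nonneg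
      · filter_upwards with y
        have : (0:ℝ) ≤ h1 y := (Real.rpow_pos_of_pos (by positivity) _).le
        positivity
      · refine mk_int _ (continuous_const.mul ((hu.continuous.pow 2).div hδ4c
          (fun y => (hδ4pos y).ne'))) (fun y hy => by
            simp [image_eq_zero_of_notMem_tsupport hy])
      · filter_upwards with y
        have h := inv_weight_le ‖y‖ (u y) (s + 1) (norm_nonneg y) (by linarith)
        rw [show 2 * (s + 1) = 4 + δ by rw [hs_def]; ring] at h
        exact h
    have heq : (∫ y, 2 * (u y ^ 2 / (1 + ‖y‖ ^ (4 + δ)))) = 2 * Q' :=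
      integral_const_mul _ _
    linarith
  have hP'0 : 0 ≤ P' := integral_nonneg (fun y => div_nonneg (sq_nonneg _) (hδpos y).le)
  have hQ'0 : 0 ≤ Q' := integral_nonneg (fun y => div_nonneg (sq_nonneg _) (hδ4pos y).le)
  -- final assembly
  have hd0 : (0:ℝ) ≤ (d:ℝ) := Nat.cast_nonneg d
  have hKQ : (4 * (d:ℝ) * s ^ 2 + 1/2) * Q ≤ (4 * (d:ℝ) * s ^ 2 + 1/2) * (2 * Q') :=
    mul_le_mul_of_nonneg_left hQle (by positivity)
  have hI2 : I ≤ (4/3) * P' + (8/3) * (4 * (d:ℝ) * s ^ 2 + 1/2) * Q' := by linarith [keyI, hPle, hKQ]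
  have h2spos : (0:ℝ) < 2 ^ s := Real.rpow_pos_of_pos (by norm_num) s
  have hIfin : I ≤ (8/3) * (4 * (d:ℝ) * s ^ 2 + 1) * (P' + Q') :=
    final_combine I P' Q' (4 * (d:ℝ) * s ^ 2) (by positivity) hP'0 hQ'0 hI2
  calc (∫ y : EuclideanSpace ℝ (Fin d), ‖fderiv ℝ u y‖ ^ 2 / (1 + ‖y‖ ^ (2 + δ)))
      ≤ 2 ^ s * I := hLHS
    _ ≤ 2 ^ s * ((8/3) * (4 * (d:ℝ) * s ^ 2 + 1) * (P' + Q')) :=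
        mul_le_mul_of_nonneg_left hIfin h2spos.le
    _ = 2 ^ s * (8/3) * (4 * (d:ℝ) * s ^ 2 + 1) * (P' + Q') := by ring
end

section
/- (Explicit solution of the modulation ODE system) Let α > 0, ℓ ∈ ℕ* with 2ℓ > α, and let L ≥ ℓ be an integer. Define c_1 = ℓ/(2ℓ-α), c_{j+1} = -α(ℓ-j)/(2ℓ-α) · c_j for 1 ≤ j ≤ ℓ-1, and c_j = 0 for j ≥ ℓ+1. Then b_j(s) := c_j/s^j for 1 ≤ j ≤ L solves, for all s > 0, the system (b_j)' + (2j-α) b_1 b_j - b_{j+1} = 0 for 1 ≤ j ≤ L, with the convention b_{L+1} ≡ 0. -/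
/-! With `b_j = c_j / s^j` we have `b_j' = -j c_j / s^{j+1}` and `b_1 b_j = c_1 c_j / s^{j+1}`, so the
whole system reduces to the coefficient identity `c_{j+1} = ((2j - α) c_1 - j) c_j` for `j ≥ 1`.
For `j < ℓ` this is the defining recursion, since `(2j - α) c_1 - j = -α(ℓ - j)/(2ℓ - α)`; for
`j = ℓ` that factor vanishes, matching `c_{ℓ+1} = 0`; beyond `ℓ` both sides are `0`. -/

theorem deriv_const_div_pow (a : ℝ) (n : ℕ) {s : ℝ} (hs : s ≠ 0) :
    deriv (fun t : ℝ => a / t ^ n) s = -(n * a) / s ^ (n + 1) := by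
  rw [deriv_const_div a (differentiableAt_pow n) (pow_ne_zero n hs), deriv_pow_field]
  rcases n with _ | n
  · simp
  · field_simp
    rw [Nat.add_sub_cancel]
    ring

theorem deriv_const_div_pow_add_mul_sub_eq_zero {α b₁ c c' s : ℝ} (j : ℕ) (hs : s ≠ 0)
    (hc' : c' = ((2 * j - α) * b₁ - j) * c) :
    deriv (fun t : ℝ => c / t ^ j) s + (2 * j - α) * (b₁ / s) * (c / s ^ j)
      - c' / s ^ (j + 1) = 0 := by
  rw [deriv_const_div_pow c j hs, hc']
  field_simp
  ring

theorem modulation_coeff_succ {α : ℝ} {ℓ : ℕ} (hden : 2 * (ℓ : ℝ) - α ≠ 0) {c : ℕ → ℝ}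
    (hc1 : c 1 = (ℓ : ℝ) / (2 * (ℓ : ℝ) - α))
    (hcrec : ∀ j : ℕ, 1 ≤ j → j ≤ ℓ - 1 →
      c (j + 1) = -(α * ((ℓ : ℝ) - (j : ℝ)) / (2 * (ℓ : ℝ) - α)) * c j)
    (hc0 : ∀ j : ℕ, ℓ + 1 ≤ j → c j = 0) {j : ℕ} (hj : 1 ≤ j) :
    c (j + 1) = ((2 * j - α) * c 1 - j) * c j := by
  rcases lt_trichotomy j ℓ with hjℓ | rfl | hℓj
  · rw [hcrec j hj (Nat.le_sub_one_of_lt hjℓ), hc1]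
    linear_combination (j * c j) * (div_self hden).symm
  · rw [hc0 (j + 1) le_rfl, hc1]
    field_simp
    ring
  · rw [hc0 j hℓj, hc0 (j + 1) (by omega), mul_zero]

theorem modulation_ode_solution_general (α : ℝ) (ℓ L : ℕ)
    (hαℓ : α < 2 * (ℓ : ℝ))
    (c : ℕ → ℝ) (hc1 : c 1 = (ℓ : ℝ) / (2 * (ℓ : ℝ) - α))
    (hcrec : ∀ j : ℕ, 1 ≤ j → j ≤ ℓ - 1 →
      c (j + 1) = -(α * ((ℓ : ℝ) - (j : ℝ)) / (2 * (ℓ : ℝ) - α)) * c j)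
    (hc0 : ∀ j : ℕ, ℓ + 1 ≤ j → c j = 0) :
    ∀ j : ℕ, 1 ≤ j → j ≤ L → ∀ s : ℝ, 0 < s →
      deriv (fun t : ℝ => c j / t ^ j) s
        + (2 * (j : ℝ) - α) * (c 1 / s) * (c j / s ^ j)
        - c (j + 1) / s ^ (j + 1) = 0 :=
  fun j hj _ _ hs => deriv_const_div_pow_add_mul_sub_eq_zero j hs.ne'
    (modulation_coeff_succ (by linarith) hc1 hcrec hc0 hj)

/-- the explicit profile `b_j(s) = c_j/s^j` solves the modulation
ODE system `(b_j)' + (2j-α) b_1 b_j - b_{j+1} = 0`, `1 ≤ j ≤ L`, with the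
convention `b_{L+1} ≡ 0` (note `c_{L+1} = 0` since `L ≥ ℓ`). -/
theorem modulation_ode_solution (α : ℝ) (hα : 0 < α) (ℓ L : ℕ)
    (hℓ : 1 ≤ ℓ) (hαℓ : α < 2 * (ℓ : ℝ)) (hL : ℓ ≤ L)
    (c : ℕ → ℝ) (hc1 : c 1 = (ℓ : ℝ) / (2 * (ℓ : ℝ) - α))
    (hcrec : ∀ j : ℕ, 1 ≤ j → j ≤ ℓ - 1 →
      c (j + 1) = -(α * ((ℓ : ℝ) - (j : ℝ)) / (2 * (ℓ : ℝ) - α)) * c j)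
    (hc0 : ∀ j : ℕ, ℓ + 1 ≤ j → c j = 0) :
    ∀ j : ℕ, 1 ≤ j → j ≤ L → ∀ s : ℝ, 0 < s →
      deriv (fun t : ℝ => c j / t ^ j) s
        + (2 * (j : ℝ) - α) * (c 1 / s) * (c j / s ^ j)
        - c (j + 1) / s ^ (j + 1) = 0 :=
  modulation_ode_solution_general α ℓ L hαℓ c hc1 hcrec hc0
end

section
/- (Virial identity for radial Schrödinger operators) Let d ≥ 1, let V, ψ be smooth radial functions with ψ compactly supported in (0,∞), and let u be a smooth compactly supported radial function on ℝ^d. Then ∫ (-Δu - Vu)(½Δψ·u + ψ'·u') = ∫ ψ''|u'|² - ¼∫ Δ²ψ·u² + ½∫ V'ψ'·u², where all integrals are over ℝ^d with measure y^{d-1}dy and Δ is the radial Laplacian. -/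
open MeasureTheory

/-- The radial Laplacian `Δf = f'' + (d-1)/y · f'`. -/
noncomputable def radLap (d : ℕ) (f : ℝ → ℝ) : ℝ → ℝ := fun y =>
  deriv (deriv f) y + ((d : ℝ) - 1) / y * deriv f y

open MeasureTheory Set Filter

lemma aux_pow (d : ℕ) (hd : 1 ≤ d) (y : ℝ) (hy : y ≠ 0) :
    ((d - 1 : ℕ) : ℝ) * y ^ (d - 1 - 1) = ((d : ℝ) - 1) * y ^ (d - 1) * y⁻¹ := by
  obtain ⟨k, rfl⟩ := Nat.exists_eq_add_of_le hd
  simp only [Nat.add_sub_cancel_left]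
  cases k with
  | zero => simp
  | succ m =>
    push_cast
    rw [pow_succ]
    field_simp
    ring

lemma aux_integrableOn (f : ℝ → ℝ) (K : Set ℝ) (hK : IsCompact K) (hKs : K ⊆ Set.Ioi 0)
    (hf : ContinuousOn f (Set.Ioi 0)) (h0 : ∀ y, y ∉ K → f y = 0) :
    IntegrableOn f (Set.Ioi 0) := by
  have h1 : IntegrableOn f K volume := (hf.mono hKs).integrableOn_compact hK
  have h2 : IntegrableOn f (Set.Ioi 0 \ K) := by
    rw [integrableOn_congr_fun (g := fun _ => (0:ℝ)) (fun y hy => h0 y hy.2)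
      (measurableSet_Ioi.diff hK.measurableSet)]
    exact integrableOn_zero
  exact (h1.union h2).mono_set (fun y hy => by
    by_cases h : y ∈ K
    · exact Or.inl h
    · exact Or.inr ⟨hy, h⟩)

noncomputable def vG1 (d : ℕ) (ψ : ℝ → ℝ) : ℝ → ℝ := fun y =>
  deriv (deriv (deriv ψ)) y + ((d : ℝ) - 1) * y⁻¹ * deriv (deriv ψ) y
    - ((d : ℝ) - 1) * (y⁻¹ * y⁻¹) * deriv ψ y

noncomputable def vG2 (d : ℕ) (ψ : ℝ → ℝ) : ℝ → ℝ := fun y =>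
  deriv (deriv (deriv (deriv ψ))) y + ((d : ℝ) - 1) * y⁻¹ * deriv (deriv (deriv ψ)) y
    - 2 * ((d : ℝ) - 1) * (y⁻¹ * y⁻¹) * deriv (deriv ψ) y
    + 2 * ((d : ℝ) - 1) * (y⁻¹ * y⁻¹ * y⁻¹) * deriv ψ y

noncomputable def vS (d : ℕ) (ψ u V : ℝ → ℝ) : ℝ → ℝ := fun y =>
  (1/4) * (vG1 d ψ y * u y ^ 2)
    - (1/2) * (deriv ψ y * deriv u y ^ 2)
    - (1/2) * ((deriv (deriv ψ) y + ((d : ℝ) - 1) * y⁻¹ * deriv ψ y) * (u y * deriv u y))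
    - (1/2) * (V y * (deriv ψ y * u y ^ 2))

noncomputable def vF (d : ℕ) (ψ u V : ℝ → ℝ) : ℝ → ℝ := fun y => y ^ (d - 1) * vS d ψ u V y

noncomputable def vH (d : ℕ) (ψ u V : ℝ → ℝ) : ℝ → ℝ := fun y =>
  (-radLap d u y - V y * u y)
      * ((1 / 2) * radLap d ψ y * u y + deriv ψ y * deriv u y) * y ^ (d - 1)
    - (deriv (deriv ψ) y * (deriv u y) ^ 2 * y ^ (d - 1)
       - (1 / 4) * ((vG2 d ψ y + ((d : ℝ) - 1) * y⁻¹ * vG1 d ψ y) * (u y) ^ 2 * y ^ (d - 1))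
       + (1 / 2) * (deriv V y * deriv ψ y * (u y) ^ 2 * y ^ (d - 1)))

lemma radLap_hasDerivAt (d : ℕ) (ψ : ℝ → ℝ) (hψ : ContDiff ℝ (⊤ : ℕ∞) ψ) (y : ℝ) (hy : y ≠ 0) :
    HasDerivAt (radLap d ψ) (vG1 d ψ y) y := by
  have hψ' : ContDiff ℝ (⊤ : ℕ∞) ψ := hψ.of_le (by simp)
  have hp1 : ContDiff ℝ (⊤ : ℕ∞) (deriv ψ) := (contDiff_infty_iff_deriv.mp hψ').2
  have hp2 : ContDiff ℝ (⊤ : ℕ∞) (deriv (deriv ψ)) := (contDiff_infty_iff_deriv.mp hp1).2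
  have hP1 : HasDerivAt (deriv ψ) (deriv (deriv ψ) y) y :=
    ((hp1.differentiable (by norm_num)) y).hasDerivAt
  have hP2 : HasDerivAt (deriv (deriv ψ)) (deriv (deriv (deriv ψ)) y) y :=
    ((hp2.differentiable (by norm_num)) y).hasDerivAt
  have hInv : HasDerivAt (fun z : ℝ => z⁻¹) (-(y⁻¹ * y⁻¹)) y := by
    have h := hasDerivAt_inv hy
    refine h.congr_deriv ?_
    rw [pow_two, mul_inv]
  have hfun : radLap d ψ = fun z => deriv (deriv ψ) z + ((d : ℝ) - 1) * z⁻¹ * deriv ψ z := by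
    funext z
    simp [radLap, div_eq_mul_inv]
  rw [hfun]
  have h := hP2.add ((hInv.const_mul ((d : ℝ) - 1)).mul hP1)
  refine h.congr_deriv ?_
  simp only [vG1]
  ring

lemma vG1_hasDerivAt (d : ℕ) (ψ : ℝ → ℝ) (hψ : ContDiff ℝ (⊤ : ℕ∞) ψ) (y : ℝ) (hy : y ≠ 0) :
    HasDerivAt (vG1 d ψ) (vG2 d ψ y) y := by
  have hψ' : ContDiff ℝ (⊤ : ℕ∞) ψ := hψ.of_le (by simp)
  have hp1 : ContDiff ℝ (⊤ : ℕ∞) (deriv ψ) := (contDiff_infty_iff_deriv.mp hψ').2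
  have hp2 : ContDiff ℝ (⊤ : ℕ∞) (deriv (deriv ψ)) := (contDiff_infty_iff_deriv.mp hp1).2
  have hp3 : ContDiff ℝ (⊤ : ℕ∞) (deriv (deriv (deriv ψ))) := (contDiff_infty_iff_deriv.mp hp2).2
  have hP1 : HasDerivAt (deriv ψ) (deriv (deriv ψ) y) y :=
    ((hp1.differentiable (by norm_num)) y).hasDerivAt
  have hP2 : HasDerivAt (deriv (deriv ψ)) (deriv (deriv (deriv ψ)) y) y :=
    ((hp2.differentiable (by norm_num)) y).hasDerivAt
  have hP3 : HasDerivAt (deriv (deriv (deriv ψ))) (deriv (deriv (deriv (deriv ψ))) y) y :=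
    ((hp3.differentiable (by norm_num)) y).hasDerivAt
  have hInv : HasDerivAt (fun z : ℝ => z⁻¹) (-(y⁻¹ * y⁻¹)) y := by
    have h := hasDerivAt_inv hy
    refine h.congr_deriv ?_
    rw [pow_two, mul_inv]
  have h := (hP3.add ((hInv.const_mul ((d : ℝ) - 1)).mul hP2)).sub
    (((hInv.mul hInv).const_mul ((d : ℝ) - 1)).mul hP1)
  refine h.congr_deriv ?_
  simp only [vG2, Pi.mul_apply]
  ring

lemma radLap_radLap_eq (d : ℕ) (ψ : ℝ → ℝ) (hψ : ContDiff ℝ (⊤ : ℕ∞) ψ) (y : ℝ) (hy : 0 < y) :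
    radLap d (radLap d ψ) y = vG2 d ψ y + ((d : ℝ) - 1) * y⁻¹ * vG1 d ψ y := by
  have hy0 : y ≠ 0 := ne_of_gt hy
  have h1 : ∀ z : ℝ, z ≠ 0 → deriv (radLap d ψ) z = vG1 d ψ z := fun z hz =>
    (radLap_hasDerivAt d ψ hψ z hz).deriv
  have hev : deriv (radLap d ψ) =ᶠ[nhds y] vG1 d ψ := by
    filter_upwards [isOpen_compl_singleton.mem_nhds (by simpa using hy0 :
      y ∈ ({(0:ℝ)}ᶜ : Set ℝ))] with z hz
    exact h1 z hz
  have h2 : HasDerivAt (deriv (radLap d ψ)) (vG2 d ψ y) y :=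
    (vG1_hasDerivAt d ψ hψ y hy0).congr_of_eventuallyEq hev
  show deriv (deriv (radLap d ψ)) y + ((d : ℝ) - 1) / y * deriv (radLap d ψ) y = _
  rw [h2.deriv, h1 y hy0, div_eq_mul_inv]

lemma vF_hasDeriv (d : ℕ) (hd : 1 ≤ d) (ψ u V : ℝ → ℝ)
    (hψ : ContDiff ℝ (⊤ : ℕ∞) ψ) (hu : ContDiff ℝ (⊤ : ℕ∞) u) (y : ℝ) (hy : 0 < y)
    (hVd : DifferentiableAt ℝ V y) :
    HasDerivAt (vF d ψ u V) (vH d ψ u V y) y := by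
  have hy0 : y ≠ 0 := ne_of_gt hy
  have hψ' : ContDiff ℝ (⊤ : ℕ∞) ψ := hψ.of_le (by simp)
  have hu' : ContDiff ℝ (⊤ : ℕ∞) u := hu.of_le (by simp)
  have hp1 : ContDiff ℝ (⊤ : ℕ∞) (deriv ψ) := (contDiff_infty_iff_deriv.mp hψ').2
  have hp2 : ContDiff ℝ (⊤ : ℕ∞) (deriv (deriv ψ)) := (contDiff_infty_iff_deriv.mp hp1).2
  have hu1 : ContDiff ℝ (⊤ : ℕ∞) (deriv u) := (contDiff_infty_iff_deriv.mp hu').2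
  have hP1 : HasDerivAt (deriv ψ) (deriv (deriv ψ) y) y :=
    ((hp1.differentiable (by norm_num)) y).hasDerivAt
  have hP2 : HasDerivAt (deriv (deriv ψ)) (deriv (deriv (deriv ψ)) y) y :=
    ((hp2.differentiable (by norm_num)) y).hasDerivAt
  have hU : HasDerivAt u (deriv u y) y := ((hu'.differentiable (by norm_num)) y).hasDerivAt
  have hU1 : HasDerivAt (deriv u) (deriv (deriv u) y) y :=
    ((hu1.differentiable (by norm_num)) y).hasDerivAt
  have hVh : HasDerivAt V (deriv V y) y := hVd.hasDerivAt
  have hInv : HasDerivAt (fun z : ℝ => z⁻¹) (-(y⁻¹ * y⁻¹)) y := by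
    have h := hasDerivAt_inv hy0
    refine h.congr_deriv ?_
    rw [pow_two, mul_inv]
  have hG1d : HasDerivAt (vG1 d ψ) (vG2 d ψ y) y := vG1_hasDerivAt d ψ hψ y hy0
  have hPow : HasDerivAt (fun z : ℝ => z ^ (d - 1)) (((d : ℝ) - 1) * y ^ (d - 1) * y⁻¹) y := by
    have h := hasDerivAt_pow (d - 1) y
    rwa [aux_pow d hd y hy0] at h
  have hS : HasDerivAt (vS d ψ u V)
      ((1/4) * (vG2 d ψ y * u y ^ 2 + vG1 d ψ y * ((2 : ℕ) * u y ^ (2-1) * deriv u y))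
        - (1/2) * (deriv (deriv ψ) y * deriv u y ^ 2
            + deriv ψ y * ((2 : ℕ) * deriv u y ^ (2-1) * deriv (deriv u) y))
        - (1/2) * ((deriv (deriv (deriv ψ)) y
              + ((((d : ℝ) - 1) * -(y⁻¹ * y⁻¹)) * deriv ψ y
                + ((d : ℝ) - 1) * y⁻¹ * deriv (deriv ψ) y)) * (u y * deriv u y)
            + (deriv (deriv ψ) y + ((d : ℝ) - 1) * y⁻¹ * deriv ψ y)
              * (deriv u y * deriv u y + u y * deriv (deriv u) y))
        - (1/2) * (deriv V y * (deriv ψ y * u y ^ 2)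
            + V y * (deriv (deriv ψ) y * u y ^ 2
                + deriv ψ y * ((2 : ℕ) * u y ^ (2-1) * deriv u y)))) y := by
    exact (((( (hG1d.mul (hU.pow 2)).const_mul (1/4)).sub
        ((hP1.mul (hU1.pow 2)).const_mul (1/2))).sub
        (((hP2.add ((hInv.const_mul ((d : ℝ) - 1)).mul hP1)).mul (hU.mul hU1)).const_mul (1/2))).sub
        ((hVh.mul (hP1.mul (hU.pow 2))).const_mul (1/2)))
  have hF := hPow.mul hS
  refine hF.congr_deriv ?_
  simp only [vH, vS, vG1, vG2, radLap]
  push_cast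
  field_simp
  ring

/-- virial identity for radial Schrödinger operators:
`∫ (-Δu - Vu)(½Δψ·u + ψ'u') = ∫ ψ''|u'|² - ¼∫ Δ²ψ·u² + ½∫ V'ψ'·u²`,
all integrals over `ℝ^d` in the radial measure `y^{d-1} dy`, for smooth radial
`V, ψ, u` with `ψ, u` compactly supported in `(0,∞)`. -/
theorem virial_identity (d : ℕ) (hd : 1 ≤ d) (V ψ u : ℝ → ℝ)
    (hV : ContDiffOn ℝ (⊤ : ℕ∞) V (Set.Ioi 0))
    (hψ : ContDiff ℝ (⊤ : ℕ∞) ψ) (hψc : HasCompactSupport ψ)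
    (hψs : tsupport ψ ⊆ Set.Ioi 0)
    (hu : ContDiff ℝ (⊤ : ℕ∞) u) (huc : HasCompactSupport u)
    (hus : tsupport u ⊆ Set.Ioi 0) :
    (∫ y in Set.Ioi (0 : ℝ),
        (-radLap d u y - V y * u y)
          * ((1 / 2) * radLap d ψ y * u y + deriv ψ y * deriv u y) * y ^ (d - 1))
      = (∫ y in Set.Ioi (0 : ℝ), deriv (deriv ψ) y * (deriv u y) ^ 2 * y ^ (d - 1))
        - (1 / 4) * (∫ y in Set.Ioi (0 : ℝ), radLap d (radLap d ψ) y * (u y) ^ 2 * y ^ (d - 1))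
        + (1 / 2) * (∫ y in Set.Ioi (0 : ℝ), deriv V y * deriv ψ y * (u y) ^ 2 * y ^ (d - 1)) := by
  have hψ' : ContDiff ℝ (⊤ : ℕ∞) ψ := hψ.of_le (by simp)
  have hu' : ContDiff ℝ (⊤ : ℕ∞) u := hu.of_le (by simp)
  have hp1 : ContDiff ℝ (⊤ : ℕ∞) (deriv ψ) := (contDiff_infty_iff_deriv.mp hψ').2
  have hp2 : ContDiff ℝ (⊤ : ℕ∞) (deriv (deriv ψ)) := (contDiff_infty_iff_deriv.mp hp1).2
  have hp3 : ContDiff ℝ (⊤ : ℕ∞) (deriv (deriv (deriv ψ))) := (contDiff_infty_iff_deriv.mp hp2).2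
  have hp4 : ContDiff ℝ (⊤ : ℕ∞) (deriv (deriv (deriv (deriv ψ)))) :=
    (contDiff_infty_iff_deriv.mp hp3).2
  have hu1 : ContDiff ℝ (⊤ : ℕ∞) (deriv u) := (contDiff_infty_iff_deriv.mp hu').2
  have hu2 : ContDiff ℝ (⊤ : ℕ∞) (deriv (deriv u)) := (contDiff_infty_iff_deriv.mp hu1).2
  -- continuity facts
  have cp1 : Continuous (deriv ψ) := hp1.continuous
  have cp2 : Continuous (deriv (deriv ψ)) := hp2.continuous
  have cp3 : Continuous (deriv (deriv (deriv ψ))) := hp3.continuous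
  have cp4 : Continuous (deriv (deriv (deriv (deriv ψ)))) := hp4.continuous
  have cu : Continuous u := hu'.continuous
  have cu1 : Continuous (deriv u) := hu1.continuous
  have cu2 : Continuous (deriv (deriv u)) := hu2.continuous
  have hinvC : ContinuousOn (fun y : ℝ => y⁻¹) (Set.Ioi 0) :=
    ContinuousOn.inv₀ continuousOn_id (fun y hy => ne_of_gt hy)
  have hdivC : ContinuousOn (fun y : ℝ => ((d : ℝ) - 1) / y) (Set.Ioi 0) :=
    ContinuousOn.div continuousOn_const continuousOn_id (fun y hy => ne_of_gt hy)
  have hVC : ContinuousOn V (Set.Ioi 0) := hV.continuousOn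
  have hV1C : ContinuousOn (deriv V) (Set.Ioi 0) :=
    hV.continuousOn_deriv_of_isOpen isOpen_Ioi (by simp)
  have cpow : Continuous (fun y : ℝ => y ^ (d - 1)) := continuous_pow _
  have crLu : ContinuousOn (radLap d u) (Set.Ioi 0) :=
    (cu2.continuousOn).add (hdivC.mul cu1.continuousOn)
  have crLψ : ContinuousOn (radLap d ψ) (Set.Ioi 0) :=
    (cp2.continuousOn).add (hdivC.mul cp1.continuousOn)
  have cG1 : ContinuousOn (vG1 d ψ) (Set.Ioi 0) :=
    ((cp3.continuousOn.add ((continuousOn_const.mul hinvC).mul cp2.continuousOn)).sub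
      ((continuousOn_const.mul (hinvC.mul hinvC)).mul cp1.continuousOn))
  have cG2 : ContinuousOn (vG2 d ψ) (Set.Ioi 0) :=
    (((cp4.continuousOn.add ((continuousOn_const.mul hinvC).mul cp3.continuousOn)).sub
      ((continuousOn_const.mul (hinvC.mul hinvC)).mul cp2.continuousOn)).add
      ((continuousOn_const.mul ((hinvC.mul hinvC).mul hinvC)).mul cp1.continuousOn))
  -- support facts
  have hu0 : ∀ y, y ∉ tsupport u → u y = 0 := fun y hy => image_eq_zero_of_notMem_tsupport hy
  have hu10 : ∀ y, y ∉ tsupport u → deriv u y = 0 := fun y hy =>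
    Function.notMem_support.mp (fun hs => hy (support_deriv_subset hs))
  have hF0 : ∀ y, y ∉ tsupport u → vF d ψ u V y = 0 := by
    intro y hy
    simp only [vF, vS]
    rw [hu0 y hy, hu10 y hy]
    ring
  have hH0 : ∀ y, y ∉ tsupport u → vH d ψ u V y = 0 := by
    intro y hy
    simp only [vH]
    rw [hu0 y hy, hu10 y hy]
    ring
  have diffV : ∀ y ∈ Set.Ioi (0:ℝ), DifferentiableAt ℝ V y := fun y hy =>
    (hV.contDiffAt (isOpen_Ioi.mem_nhds hy)).differentiableAt (by simp)
  -- integrability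
  have hIntH : IntegrableOn (vH d ψ u V) (Set.Ioi 0) := by
    apply aux_integrableOn _ (tsupport u) huc hus _ hH0
    apply ContinuousOn.sub
    · exact (((crLu.neg.sub (hVC.mul cu.continuousOn)).mul
        (((continuousOn_const.mul crLψ).mul cu.continuousOn).add
          (cp1.continuousOn.mul cu1.continuousOn))).mul cpow.continuousOn)
    · exact (((cp2.continuousOn.mul (cu1.continuousOn.pow 2)).mul cpow.continuousOn).sub
        (continuousOn_const.mul (((cG2.add ((continuousOn_const.mul hinvC).mul cG1)).mul
          (cu.continuousOn.pow 2)).mul cpow.continuousOn))).add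
        (continuousOn_const.mul (((hV1C.mul cp1.continuousOn).mul
          (cu.continuousOn.pow 2)).mul cpow.continuousOn))
  have hInt1 : IntegrableOn (fun y => deriv (deriv ψ) y * (deriv u y) ^ 2 * y ^ (d - 1))
      (Set.Ioi 0) := by
    apply aux_integrableOn _ (tsupport u) huc hus
    · exact ((cp2.mul (cu1.pow 2)).mul cpow).continuousOn
    · intro y hy; rw [hu10 y hy]; ring
  have hInt2 : IntegrableOn (fun y => radLap d (radLap d ψ) y * (u y) ^ 2 * y ^ (d - 1))
      (Set.Ioi 0) := by
    apply aux_integrableOn _ (tsupport u) huc hus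
    · have ccf : ContinuousOn
          (fun y : ℝ => (vG2 d ψ y + ((d : ℝ) - 1) * y⁻¹ * vG1 d ψ y) * u y ^ 2 * y ^ (d - 1))
          (Set.Ioi 0) :=
        ((cG2.add ((continuousOn_const.mul hinvC).mul cG1)).mul
          (cu.continuousOn.pow 2)).mul cpow.continuousOn
      apply ContinuousOn.congr ccf
      intro y hy
      simp only [radLap_radLap_eq d ψ hψ y hy]
    · intro y hy; rw [hu0 y hy]; ring
  have hInt3 : IntegrableOn (fun y => deriv V y * deriv ψ y * (u y) ^ 2 * y ^ (d - 1))
      (Set.Ioi 0) := by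
    apply aux_integrableOn _ (tsupport u) huc hus
    · exact ((hV1C.mul cp1.continuousOn).mul (cu.continuousOn.pow 2)).mul cpow.continuousOn
    · intro y hy; rw [hu0 y hy]; ring
  -- the boundary term vanishes
  have hne0 : (0:ℝ) ∉ tsupport u := fun h => lt_irrefl (0:ℝ) (hus h)
  have hzero : (∫ y in Set.Ioi (0:ℝ), vH d ψ u V y) = 0 := by
    have hcont0 : ContinuousWithinAt (vF d ψ u V) (Set.Ici 0) 0 := by
      have hev : vF d ψ u V =ᶠ[nhds (0:ℝ)] fun _ => 0 := by
        filter_upwards [(isClosed_tsupport u).isOpen_compl.mem_nhds hne0] with z hz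
        exact hF0 z hz
      exact (continuousAt_const.congr hev.symm).continuousWithinAt
    have htend : Tendsto (vF d ψ u V) atTop (nhds 0) := by
      obtain ⟨R, hR⟩ := huc.isCompact.bddAbove
      have hev : vF d ψ u V =ᶠ[atTop] fun _ => 0 := by
        filter_upwards [eventually_gt_atTop R] with z hz
        exact hF0 z (fun hzK => absurd (hR hzK) (not_le.mpr hz))
      exact Tendsto.congr' hev.symm tendsto_const_nhds
    have key := integral_Ioi_of_hasDerivAt_of_tendsto hcont0
      (fun y hy => vF_hasDeriv d hd ψ u V hψ hu y hy (diffV y hy)) hIntH htend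
    rw [key, hF0 0 hne0, sub_zero]
  -- pointwise identity
  have congr1 : (∫ y in Set.Ioi (0 : ℝ),
        (-radLap d u y - V y * u y)
          * ((1 / 2) * radLap d ψ y * u y + deriv ψ y * deriv u y) * y ^ (d - 1))
      = ∫ y in Set.Ioi (0 : ℝ),
        ((deriv (deriv ψ) y * (deriv u y) ^ 2 * y ^ (d - 1)
          - (1/4) * (radLap d (radLap d ψ) y * (u y) ^ 2 * y ^ (d - 1))
          + (1/2) * (deriv V y * deriv ψ y * (u y) ^ 2 * y ^ (d - 1)))
          + vH d ψ u V y) := by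
    apply setIntegral_congr_fun measurableSet_Ioi
    intro y hy
    have e2 := radLap_radLap_eq d ψ hψ y hy
    simp only [vH]
    rw [e2]
    ring
  rw [congr1]
  have hQ2 : IntegrableOn
      (fun y : ℝ => (1/4) * (radLap d (radLap d ψ) y * (u y) ^ 2 * y ^ (d - 1)))
      (Set.Ioi 0) := hInt2.const_mul _
  have hQ3 : IntegrableOn
      (fun y : ℝ => (1/2) * (deriv V y * deriv ψ y * (u y) ^ 2 * y ^ (d - 1)))
      (Set.Ioi 0) := hInt3.const_mul _
  have hB : IntegrableOn
      (fun y : ℝ => deriv (deriv ψ) y * (deriv u y) ^ 2 * y ^ (d - 1)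
        - (1/4) * (radLap d (radLap d ψ) y * (u y) ^ 2 * y ^ (d - 1)))
      (Set.Ioi 0) := hInt1.sub hQ2
  have hA : IntegrableOn
      (fun y : ℝ => deriv (deriv ψ) y * (deriv u y) ^ 2 * y ^ (d - 1)
        - (1/4) * (radLap d (radLap d ψ) y * (u y) ^ 2 * y ^ (d - 1))
        + (1/2) * (deriv V y * deriv ψ y * (u y) ^ 2 * y ^ (d - 1)))
      (Set.Ioi 0) := hB.add hQ3
  have step1 : (∫ y in Set.Ioi (0 : ℝ),
        ((deriv (deriv ψ) y * (deriv u y) ^ 2 * y ^ (d - 1)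
          - (1/4) * (radLap d (radLap d ψ) y * (u y) ^ 2 * y ^ (d - 1))
          + (1/2) * (deriv V y * deriv ψ y * (u y) ^ 2 * y ^ (d - 1)))
          + vH d ψ u V y))
      = (∫ y in Set.Ioi (0 : ℝ),
          (deriv (deriv ψ) y * (deriv u y) ^ 2 * y ^ (d - 1)
          - (1/4) * (radLap d (radLap d ψ) y * (u y) ^ 2 * y ^ (d - 1))
          + (1/2) * (deriv V y * deriv ψ y * (u y) ^ 2 * y ^ (d - 1))))
        + ∫ y in Set.Ioi (0 : ℝ), vH d ψ u V y := integral_add hA hIntH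
  have step2 : (∫ y in Set.Ioi (0 : ℝ),
        (deriv (deriv ψ) y * (deriv u y) ^ 2 * y ^ (d - 1)
          - (1/4) * (radLap d (radLap d ψ) y * (u y) ^ 2 * y ^ (d - 1))
          + (1/2) * (deriv V y * deriv ψ y * (u y) ^ 2 * y ^ (d - 1))))
      = (∫ y in Set.Ioi (0 : ℝ),
          (deriv (deriv ψ) y * (deriv u y) ^ 2 * y ^ (d - 1)
          - (1/4) * (radLap d (radLap d ψ) y * (u y) ^ 2 * y ^ (d - 1))))
        + ∫ y in Set.Ioi (0 : ℝ),
            (1/2) * (deriv V y * deriv ψ y * (u y) ^ 2 * y ^ (d - 1)) :=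
    integral_add hB hQ3
  have step3 : (∫ y in Set.Ioi (0 : ℝ),
        (deriv (deriv ψ) y * (deriv u y) ^ 2 * y ^ (d - 1)
          - (1/4) * (radLap d (radLap d ψ) y * (u y) ^ 2 * y ^ (d - 1))))
      = (∫ y in Set.Ioi (0 : ℝ), deriv (deriv ψ) y * (deriv u y) ^ 2 * y ^ (d - 1))
        - ∫ y in Set.Ioi (0 : ℝ),
            (1/4) * (radLap d (radLap d ψ) y * (u y) ^ 2 * y ^ (d - 1)) :=
    integral_sub hInt1 hQ2
  have step4 : (∫ y in Set.Ioi (0 : ℝ),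
        (1/4) * (radLap d (radLap d ψ) y * (u y) ^ 2 * y ^ (d - 1)))
      = (1/4) * ∫ y in Set.Ioi (0 : ℝ), radLap d (radLap d ψ) y * (u y) ^ 2 * y ^ (d - 1) :=
    integral_const_mul _ _
  have step5 : (∫ y in Set.Ioi (0 : ℝ),
        (1/2) * (deriv V y * deriv ψ y * (u y) ^ 2 * y ^ (d - 1)))
      = (1/2) * ∫ y in Set.Ioi (0 : ℝ), deriv V y * deriv ψ y * (u y) ^ 2 * y ^ (d - 1) :=
    integral_const_mul _ _
  rw [step1, hzero, add_zero, step2, step3, step4, step5]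
end
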